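/- (Dual residual bound.) Let (x^{k+1}, ỹ^{k+1}, y^{k+1}) be produced by one SPIDA iteration from (x^k, y^k), with φ differentiable convex and ∇φ Lipschitz continuous with modulus L_φ. Then there exists ζ^{k+1} ∈ ∂g(y^{k+1}) such that ‖y^{k+1} − Π_Y[y^{k+1} − (ζ^{k+1} − Ax^{k+1})]‖² ≤ γ² L_φ² ‖y^{k+1} − y^k‖² ≤ 2γ² L_φ² ‖y^{k+1} − ỹ^{k+1}‖² + 2γ² L_φ² ‖ỹ^{k+1} − y^k‖², where Π_Y is the Euclidean projection onto Y. -/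

import Mathlib

noncomputable section
open scoped RealInnerProductSpace
open Filter

abbrev Euc (d : ℕ) : Type := EuclideanSpace ℝ (Fin d)

/-- Bregman distance associated with kernel `φ` whose gradient map is `φ'`. -/
def Breg {d : ℕ} (φ : Euc d → ℝ) (φ' : Euc d → Euc d) (x y : Euc d) : ℝ :=
  φ x - φ y - ⟪φ' y, x - y⟫

/-- Convex subdifferential. -/
def subdiff {d : ℕ} (h : Euc d → ℝ) (x : Euc d) : Set (Euc d) :=
  {ξ | ∀ z, h x + ⟪z - x, ξ⟫ ≤ h z}

open Classical in
/-- Euclidean (metric) projection onto a set (the nearest point, when it exists). -/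
def projOn {d : ℕ} (X : Set (Euc d)) (z : Euc d) : Euc d :=
  if h : ∃ p ∈ X, ∀ w ∈ X, ‖z - p‖ ≤ ‖z - w‖ then h.choose else z

/-!
The maximality of `y1` gives the first-order condition
`A x1 - γ (∇φ y1 - ∇φ yk) ∈ ∂g(y1) + N_Y(y1)`; separating the strict epigraph of the
tilted function `g - ⟪·, A x1 - γ (∇φ y1 - ∇φ yk)⟫` from `Y` splits this into
`ζ ∈ ∂g(y1)` plus a normal vector `ν` to `Y` at `y1`. Then
`y1 - (ζ - A x1) = y1 + ν + γ (∇φ y1 - ∇φ yk)`, and projecting onto `Y` a point of the form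
`y1 + ν + e` lands within `‖e‖` of `y1`; the Lipschitz bound on `∇φ` finishes.
-/

open Set InnerProductSpace

theorem IsMinOn.sub_le_fderiv_of_convexOn_add {E : Type*} [NormedAddCommGroup E]
    [NormedSpace ℝ E] {s : Set E} {F h : E → ℝ} {h' : E →L[ℝ] ℝ} {x y : E}
    (hmin : IsMinOn (F + h) s x) (hF : ConvexOn ℝ s F) (hh : HasFDerivAt h h' x)
    (hx : x ∈ s) (hy : y ∈ s) : F x - F y ≤ h' (y - x) := by
  -- `θ` majorizes `F + h` along the segment `[x, y]` and agrees with it at `x`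
  let θ : ℝ → ℝ := fun t => (1 - t) * F x + t * F y + h (x + t • (y - x))
  have hline : HasDerivAt (fun t : ℝ => x + t • (y - x)) (y - x) 0 := by
    simpa using ((hasDerivAt_id (0 : ℝ)).smul_const (y - x)).const_add x
  have hh0 : HasFDerivAt h h' (x + (0 : ℝ) • (y - x)) := by simpa using hh
  have hθ : HasDerivAt θ (-1 * F x + 1 * F y + h' (y - x)) 0 :=
    ((((hasDerivAt_id 0).const_sub 1).mul_const (F x)).add
      ((hasDerivAt_id 0).mul_const (F y))).add (hh0.comp_hasDerivAt 0 hline)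
  have hθmin : IsMinOn θ (Icc 0 1) 0 := by
    rintro t ⟨ht0, ht1⟩
    have hseg : (1 - t) • x + t • y = x + t • (y - x) := by module
    have hFt := hF.2 hx hy (sub_nonneg.2 ht1) ht0 (by ring)
    have hmin_t := hmin (hF.1 hx hy (sub_nonneg.2 ht1) ht0 (by ring))
    rw [hseg] at hFt hmin_t
    simp only [mem_ofPred_eq, Pi.add_apply, smul_eq_mul] at hFt hmin_t ⊢
    simp only [θ, sub_zero, one_mul, zero_mul, zero_smul, add_zero]
    linarith
  have hθ' := hθmin.localize.hasFDerivWithinAt_nonneg hθ.hasFDerivAt.hasFDerivWithinAt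
    (y := 1) (mem_posTangentConeAt_of_segment_subset (by simp [segment_eq_Icc]))
  simp only [neg_mul, one_mul, map_sub, ContinuousLinearMap.toSpanSingleton_apply, smul_eq_mul]
    at hθ'
  rw [map_sub]
  linarith

theorem hasGradientAt_breg {d : ℕ} {φ : Euc d → ℝ} {φ' : Euc d → Euc d} {x : Euc d}
    (hφ : HasGradientAt φ (φ' x) x) (w : Euc d) :
    HasGradientAt (Breg φ φ' · w) (φ' x - φ' w) x := by
  have hBreg : (Breg φ φ' · w) =
      fun y => φ y - φ w - (toDual ℝ (Euc d) (φ' w) y - ⟪φ' w, w⟫) := by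
    funext y
    rw [toDual_apply_apply, Breg, inner_sub_right]
  rw [hasGradientAt_iff_hasFDerivAt, map_sub, hBreg]
  exact (hφ.hasFDerivAt.sub_const (φ w)).sub
    ((toDual ℝ (Euc d) (φ' w)).hasFDerivAt.sub_const ⟪φ' w, w⟫)

theorem inner_sub_le_of_isMaxOn_bregman {d : ℕ} {Y : Set (Euc d)} {g φ : Euc d → ℝ}
    {φ' : Euc d → Euc d} {b yk y1 : Euc d} {γ : ℝ} (hg : ConvexOn ℝ Y g)
    (hφ : HasGradientAt φ (φ' y1) y1) (hy1 : y1 ∈ Y)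
    (hmax : ∀ y ∈ Y, -g y + ⟪b, y⟫ - γ * Breg φ φ' y yk ≤
      -g y1 + ⟪b, y1⟫ - γ * Breg φ φ' y1 yk) {y : Euc d} (hy : y ∈ Y) :
    ⟪b - γ • (φ' y1 - φ' yk), y - y1⟫ ≤ g y - g y1 := by
  have hmin : IsMinOn (g + fun y => γ * Breg φ φ' y yk - ⟪b, y⟫) Y y1 := fun y hy => by
    simp only [mem_ofPred_eq, Pi.add_apply]
    linarith [hmax y hy]
  have hderiv : HasFDerivAt (fun y => γ * Breg φ φ' y yk - ⟪b, y⟫)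
      (γ • toDual ℝ (Euc d) (φ' y1 - φ' yk) - toDual ℝ (Euc d) b) y1 :=
    ((hasGradientAt_breg hφ yk).hasFDerivAt.const_mul γ).sub (toDual ℝ (Euc d) b).hasFDerivAt
  have := hmin.sub_le_fderiv_of_convexOn_add hg hderiv hy1 hy
  simp only [sub_apply, smul_apply, toDual_apply_apply, smul_eq_mul] at this
  rw [inner_sub_left, real_inner_smul_left]
  linarith

theorem IsMinOn.exists_subgradient_nonneg_on {E : Type*} [NormedAddCommGroup E]
    [NormedSpace ℝ E] {G : E → ℝ} {Y : Set E} {y₀ : E} (hmin : IsMinOn G Y y₀)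
    (hG : ConvexOn ℝ univ G) (hGc : Continuous G) (hY : Convex ℝ Y) (hy₀ : y₀ ∈ Y) :
    ∃ ℓ : E →L[ℝ] ℝ, (∀ z, G y₀ + ℓ (z - y₀) ≤ G z) ∧ ∀ w ∈ Y, 0 ≤ ℓ (w - y₀) := by
  -- separate the strict epigraph of `G` from `Y × (-∞, G y₀]`
  have hopen : IsOpen {p : E × ℝ | p.1 ∈ univ ∧ G p.1 < p.2} := by
    simpa only [mem_univ, true_and, Function.comp_def] using
      isOpen_lt (hGc.comp continuous_fst) continuous_snd
  have hdisj : Disjoint {p : E × ℝ | p.1 ∈ univ ∧ G p.1 < p.2} (Y ×ˢ Iic (G y₀)) := by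
    rw [disjoint_left]
    rintro ⟨w, t⟩ ⟨-, hlt⟩ ⟨hw, ht⟩
    exact (hmin hw).not_gt (hlt.trans_le ht)
  obtain ⟨F, u, hFepi, hFY⟩ :=
    geometric_hahn_banach_open hG.convex_strict_epigraph hopen (hY.prod (convex_Iic _)) hdisj
  set L : E →L[ℝ] ℝ := F.comp (.inl ℝ E ℝ)
  set c : ℝ := F (0, 1)
  have hF : ∀ w t, F (w, t) = L w + t * c := fun w t => by
    rw [show ((w, t) : E × ℝ) = (w, 0) + t • (0, 1) by simp, map_add, map_smul, smul_eq_mul]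
    rfl
  have hepi : ∀ w, ∀ t > G w, L w + t * c < u := fun w t ht => by
    simpa [hF] using hFepi (w, t) ⟨mem_univ w, ht⟩
  have hYu : ∀ w ∈ Y, u ≤ L w + G y₀ * c := fun w hw => by
    simpa [hF] using hFY (w, G y₀) ⟨hw, mem_Iic.2 le_rfl⟩
  have hc : c < 0 := by
    have := hepi y₀ (G y₀ + 1) (lt_add_one _)
    linarith [hYu y₀ hy₀]
  have hepi_le : ∀ w, L w + G w * c ≤ u := fun w =>
    le_of_forall_pos_lt_add fun ε hε => by
      have := hepi w (G w + ε / -c) (lt_add_of_pos_right _ (div_pos hε (neg_pos.2 hc)))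
      have hεc : ε / -c * c = -ε := by field_simp [hc.ne]
      linarith
  have hu : u = L y₀ + G y₀ * c := le_antisymm (hYu y₀ hy₀) (hepi_le y₀)
  refine ⟨(-c)⁻¹ • L, fun z => ?_, fun w hw => ?_⟩
  · rw [smul_apply, smul_eq_mul, map_sub, ← le_sub_iff_add_le', inv_mul_le_iff₀ (neg_pos.2 hc)]
    linarith [hepi_le z]
  · rw [smul_apply, smul_eq_mul, map_sub]
    exact mul_nonneg (inv_nonneg.2 (neg_nonneg.2 hc.le)) (by linarith [hYu w hw])

theorem exists_mem_subdiff_inner_sub_nonpos {d : ℕ} {g : Euc d → ℝ} {Y : Set (Euc d)}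
    {y₀ v : Euc d} (hg : ConvexOn ℝ univ g) (hY : Convex ℝ Y) (hy₀ : y₀ ∈ Y)
    (hv : ∀ w ∈ Y, ⟪v, w - y₀⟫ ≤ g w - g y₀) :
    ∃ ζ ∈ subdiff g y₀, ∀ w ∈ Y, ⟪v - ζ, w - y₀⟫ ≤ 0 := by
  have hmin : IsMinOn (fun w => g w - ⟪v, w⟫) Y y₀ := fun w hw => by
    have := hv w hw
    rw [inner_sub_right] at this
    simp only [mem_ofPred_eq]
    linarith
  have hconv : ConvexOn ℝ univ (fun w => g w - ⟪v, w⟫) :=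
    hg.sub ((innerₛₗ ℝ v).concaveOn convex_univ)
  obtain ⟨ℓ, hsub, hnonneg⟩ := hmin.exists_subgradient_nonneg_on hconv
    (continuousOn_univ.1 (hconv.continuousOn isOpen_univ)) hY hy₀
  refine ⟨v + (toDual ℝ (Euc d)).symm ℓ, fun z => ?_, fun w hw => ?_⟩
  · have := hsub z
    rw [inner_add_right, real_inner_comm ((toDual ℝ (Euc d)).symm ℓ), toDual_symm_apply,
      inner_sub_left, real_inner_comm v, real_inner_comm v]
    linarith
  · rw [sub_add_cancel_left, inner_neg_left, toDual_symm_apply, neg_nonpos]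
    exact hnonneg w hw

theorem projOn_spec {d : ℕ} {Y : Set (Euc d)} (hYcl : IsClosed Y) (hYcv : Convex ℝ Y)
    (hYne : Y.Nonempty) (z : Euc d) :
    projOn Y z ∈ Y ∧ ∀ w ∈ Y, ⟪z - projOn Y z, w - projOn Y z⟫ ≤ 0 := by
  have hbdd : BddBelow (range fun w : Y => ‖z - w‖) := ⟨0, by simp [lowerBounds]⟩
  obtain ⟨q, hqY, hq⟩ := exists_norm_eq_iInf_of_complete_convex hYne hYcl.isComplete hYcv z
  have hex : ∃ p ∈ Y, ∀ w ∈ Y, ‖z - p‖ ≤ ‖z - w‖ :=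
    ⟨q, hqY, fun w hw => hq ▸ ciInf_le hbdd ⟨w, hw⟩⟩
  rw [projOn, dif_pos hex]
  obtain ⟨hpY, hpmin⟩ := hex.choose_spec
  have : Nonempty Y := hYne.to_subtype
  refine ⟨hpY, (norm_eq_iInf_iff_real_inner_le_zero hYcv hpY).1 ?_⟩
  exact le_antisymm (le_ciInf fun w => hpmin w w.2) (ciInf_le hbdd ⟨_, hpY⟩)

theorem norm_sub_projOn_add_le {d : ℕ} {Y : Set (Euc d)} (hYcl : IsClosed Y)
    (hYcv : Convex ℝ Y) {y ν : Euc d} (hy : y ∈ Y) (hν : ∀ w ∈ Y, ⟪ν, w - y⟫ ≤ 0)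
    (e : Euc d) : ‖y - projOn Y (y + ν + e)‖ ≤ ‖e‖ := by
  obtain ⟨hpY, hproj⟩ := projOn_spec hYcl hYcv ⟨y, hy⟩ (y + ν + e)
  set p := projOn Y (y + ν + e)
  have hsq : ‖y - p‖ ^ 2 ≤ ‖e‖ * ‖y - p‖ :=
    calc ‖y - p‖ ^ 2 ≤ ⟪e, p - y⟫ := by
          have h1 := hproj y hy
          have h2 := hν p hpY
          rw [show y + ν + e - p = (y - p) + ν + e by abel, inner_add_left, inner_add_left,
            real_inner_self_eq_norm_sq] at h1
          have hflip (u : Euc d) : ⟪u, y - p⟫ = -⟪u, p - y⟫ := by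
            rw [← inner_neg_right, neg_sub]
          linarith [hflip ν, hflip e]
      _ ≤ ‖e‖ * ‖y - p‖ := norm_sub_rev p y ▸ real_inner_le_norm e (p - y)
  nlinarith [norm_nonneg (y - p), norm_nonneg e]

theorem sq_norm_sub_le_two_mul {E : Type*} [SeminormedAddCommGroup E] (a b c : E) :
    ‖a - c‖ ^ 2 ≤ 2 * ‖a - b‖ ^ 2 + 2 * ‖b - c‖ ^ 2 :=
  calc ‖a - c‖ ^ 2 ≤ (‖a - b‖ + ‖b - c‖) ^ 2 := by
        gcongr; exact norm_sub_le_norm_sub_add_norm_sub a b c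
    _ ≤ 2 * ‖a - b‖ ^ 2 + 2 * ‖b - c‖ ^ 2 := by
        linarith [add_sq_le (a := ‖a - b‖) (b := ‖b - c‖)]

theorem spida_dual_residual_bound_general {n m : ℕ}
    (Y : Set (Euc m))
    (hYcl : IsClosed Y) (hYcv : Convex ℝ Y)
    (g : Euc m → ℝ)
    (hg : ConvexOn ℝ Set.univ g)
    (A : Euc n →L[ℝ] Euc m)
    (γ : ℝ)
    (φ : Euc m → ℝ) (φ' : Euc m → Euc m)
    (hφg : ∀ z, HasGradientAt φ (φ' z) z)
    (x1 : Euc n) (yk yt1 y1 : Euc m)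
    (hy1mem : y1 ∈ Y)
    (hy1max : ∀ y ∈ Y, -g y + ⟪A x1, y⟫ - γ * Breg φ φ' y yk ≤
      -g y1 + ⟪A x1, y1⟫ - γ * Breg φ φ' y1 yk)
    (Lφ : NNReal) (hφlip : LipschitzWith Lφ φ') :
    ∃ ζ ∈ subdiff g y1,
      ‖y1 - projOn Y (y1 - (ζ - A x1))‖ ^ 2 ≤ γ ^ 2 * (Lφ : ℝ) ^ 2 * ‖y1 - yk‖ ^ 2 ∧
        γ ^ 2 * (Lφ : ℝ) ^ 2 * ‖y1 - yk‖ ^ 2 ≤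
          2 * γ ^ 2 * (Lφ : ℝ) ^ 2 * ‖y1 - yt1‖ ^ 2
            + 2 * γ ^ 2 * (Lφ : ℝ) ^ 2 * ‖yt1 - yk‖ ^ 2 := by
  set Δ := φ' y1 - φ' yk
  obtain ⟨ζ, hζ, hnormal⟩ := exists_mem_subdiff_inner_sub_nonpos hg hYcv hy1mem
    fun y hy => inner_sub_le_of_isMaxOn_bregman (hg.subset (subset_univ Y) hYcv) (hφg y1)
      hy1mem hy1max hy
  have hres : ‖y1 - projOn Y (y1 - (ζ - A x1))‖ ≤ |γ| * Lφ * ‖y1 - yk‖ :=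
    calc ‖y1 - projOn Y (y1 - (ζ - A x1))‖
        = ‖y1 - projOn Y (y1 + (A x1 - γ • Δ - ζ) + γ • Δ)‖ := by congr 3; abel
      _ ≤ ‖γ • Δ‖ := norm_sub_projOn_add_le hYcl hYcv hy1mem hnormal _
      _ ≤ |γ| * Lφ * ‖y1 - yk‖ := by
          rw [norm_smul, Real.norm_eq_abs, mul_assoc]
          gcongr
          exact hφlip.norm_sub_le y1 yk
  refine ⟨ζ, hζ, ?_, ?_⟩
  · calc _ ≤ (|γ| * Lφ * ‖y1 - yk‖) ^ 2 := by gcongr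
      _ = _ := by rw [mul_pow, mul_pow, sq_abs]
  · have := mul_le_mul_of_nonneg_left (sq_norm_sub_le_two_mul y1 yt1 yk)
      (by positivity : (0 : ℝ) ≤ γ ^ 2 * (Lφ : ℝ) ^ 2)
    linarith

/-- dual residual bound for one SPIDA iteration. -/
theorem spida_dual_residual_bound {n m : ℕ}
    (X : Set (Euc n)) (Y : Set (Euc m))
    (hXne : X.Nonempty) (hXcl : IsClosed X) (hXcv : Convex ℝ X)
    (hYne : Y.Nonempty) (hYcl : IsClosed Y) (hYcv : Convex ℝ Y)
    (f : Euc n → ℝ) (g : Euc m → ℝ)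
    (hf : ConvexOn ℝ Set.univ f) (hflsc : LowerSemicontinuous f)
    (hg : ConvexOn ℝ Set.univ g) (hglsc : LowerSemicontinuous g)
    (A : Euc n →L[ℝ] Euc m)
    (γ μ : ℝ) (hγ : 0 < γ) (hμ : 0 < μ)
    (φ : Euc m → ℝ) (φ' : Euc m → Euc m)
    (hφg : ∀ z, HasGradientAt φ (φ' z) z) (hφcv : ConvexOn ℝ Set.univ φ)
    (ψ : Euc n → ℝ) (ψ' : Euc n → Euc n)
    (hψg : ∀ z, HasGradientAt ψ (ψ' z) z) (hψcv : ConvexOn ℝ Set.univ ψ)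
    (xk x1 : Euc n) (yk yt1 y1 : Euc m)
    (hxk : xk ∈ X) (hyk : yk ∈ Y)
    (hyt1mem : yt1 ∈ Y)
    (hyt1max : ∀ y ∈ Y, -g y + ⟪A xk, y⟫ - γ * Breg φ φ' y yk ≤
      -g yt1 + ⟪A xk, yt1⟫ - γ * Breg φ φ' yt1 yk)
    (hx1mem : x1 ∈ X)
    (hx1min : ∀ x ∈ X, f x1 + ⟪A x1, yt1⟫ + μ * Breg ψ ψ' x1 xk ≤
      f x + ⟪A x, yt1⟫ + μ * Breg ψ ψ' x xk)
    (hy1mem : y1 ∈ Y)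
    (hy1max : ∀ y ∈ Y, -g y + ⟪A x1, y⟫ - γ * Breg φ φ' y yk ≤
      -g y1 + ⟪A x1, y1⟫ - γ * Breg φ φ' y1 yk)
    (Lφ : NNReal) (hφlip : LipschitzWith Lφ φ') :
    ∃ ζ ∈ subdiff g y1,
      ‖y1 - projOn Y (y1 - (ζ - A x1))‖ ^ 2 ≤ γ ^ 2 * (Lφ : ℝ) ^ 2 * ‖y1 - yk‖ ^ 2 ∧
        γ ^ 2 * (Lφ : ℝ) ^ 2 * ‖y1 - yk‖ ^ 2 ≤
          2 * γ ^ 2 * (Lφ : ℝ) ^ 2 * ‖y1 - yt1‖ ^ 2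
            + 2 * γ ^ 2 * (Lφ : ℝ) ^ 2 * ‖yt1 - yk‖ ^ 2 :=
  spida_dual_residual_bound_general Y hYcl hYcv g hg A γ φ φ' hφg x1 yk yt1 y1 hy1mem hy1max Lφ
    hφlip
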